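/- For any positive integer j and any graph G, α_j(G) ≤ max{k ∈ ℤ | Σ_{i=1}^k d_i + C(χ_j(G)−1, 2) − k(j−1)/2 ≤ m(G)}. -/

import Mathlib

open Finset

namespace DSI

variable {V : Type*} (G : SimpleGraph V) [Fintype V] [DecidableEq V] [DecidableRel G.Adj]

/-- The degree sequence of `G`, sorted in non-decreasing order. -/
def dseq : List ℕ := (Finset.univ.val.map (fun v => G.degree v)).sort (· ≤ ·)

/-- The sum of the `k` smallest degrees, `Σ_{i=1}^k d_i`. -/
def sumSmallest (k : ℕ) : ℕ := ((dseq G).take k).sum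

/-- The sum of the `k` largest degrees, `Σ_{i=1}^k d_{n-i+1}`. -/
def sumLargest (k : ℕ) : ℕ := ((dseq G).reverse.take k).sum

/-- The number of edges `m(G)`. -/
def esize : ℕ := G.edgeFinset.card

/-- `m[S]`: the number of edges of the subgraph induced by `S`. -/
def mOn (S : Finset V) : ℕ := (S.sym2.filter (fun e => e ∈ G.edgeSet)).card

/-- A set `I` is `j`-independent if every vertex of `I` has fewer than `j` neighbours in `I`,
i.e. the induced subgraph has maximum degree `< j`. -/
def JIndep (j : ℕ) (I : Finset V) : Prop := ∀ v ∈ I, (I.filter (G.Adj v)).card < j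

/-- The `j`-independence number `α_j(G)`. -/
noncomputable def alphaJ (j : ℕ) : ℕ := sSup {k | ∃ I : Finset V, JIndep G j I ∧ I.card = k}

/-- The family `F` of maximum `j`-independent sets. -/
noncomputable def maxJIndep (j : ℕ) : Set (Finset V) :=
  {S | JIndep G j S ∧ S.card = alphaJ G j}

/-- `max_{S ∈ F} (m[V−S] − m[S])`. -/
noncomputable def fU (j : ℕ) : ℤ :=
  sSup ((fun S : Finset V => (mOn G Sᶜ : ℤ) - (mOn G S : ℤ)) '' maxJIndep G j)

/-- `min_{S ∈ F} (m[V−S] − m[S])`. -/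
noncomputable def fL (j : ℕ) : ℤ :=
  sInf ((fun S : Finset V => (mOn G Sᶜ : ℤ) - (mOn G S : ℤ)) '' maxJIndep G j)

/-- The upper `j`-annihilation number `a_j(G)`. -/
noncomputable def aJ (j : ℕ) : ℕ :=
  sSup {k | k ≤ Fintype.card V ∧ (sumSmallest G k : ℤ) + fU G j ≤ (esize G : ℤ)}

/-- The lower `j`-annihilation number `c_j(G)`. -/
noncomputable def cJ (j : ℕ) : ℕ :=
  sInf {k | k ≤ Fintype.card V ∧ (esize G : ℤ) ≤ (sumLargest G k : ℤ) + fL G j}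

/-- The annihilation number `a(G)`. -/
noncomputable def annihilation : ℕ :=
  sSup {k | k ≤ Fintype.card V ∧ sumSmallest G k ≤ esize G}

/-- An independent set. -/
def IndepSet (I : Finset V) : Prop := ∀ v ∈ I, ∀ w ∈ I, ¬ G.Adj v w

/-- The independence number `α(G)`. -/
noncomputable def alpha : ℕ := sSup {k | ∃ I : Finset V, IndepSet G I ∧ I.card = k}

end DSI
/-- The `j`-chromatic number `χ_j(G)`: the fewest number of `j`-independent sets that
the vertex set can be partitioned into (as colour classes of a colouring). -/
noncomputable def DSI.chiJ {V : Type*} (G : SimpleGraph V) [Fintype V]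
    [DecidableEq V] [DecidableRel G.Adj] (j : ℕ) : ℕ :=
  sInf {t | ∃ f : V → Fin t, ∀ c : Fin t,
    DSI.JIndep G j (Finset.univ.filter (fun v => f v = c))}

/-! Let `I` be a maximum `j`-independent set. Its degree sum dominates the sum of the `|I|`
smallest degrees and equals `m + m[I] - m[V - I]`, while `2 m[I] ≤ |I| (j - 1)` because every
vertex of `I` has fewer than `j` neighbours in `I`. It remains to see `C(χ_j - 1, 2) ≤ m[V - I]`.
Colouring `I` with one extra colour shows `χ_j(G[V - I]) ≥ χ_j - 1`, and in a colouring of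
`G[V - I]` with the fewest colours any two colour classes are joined by an edge: otherwise their
union is still `j`-independent and the two classes could be merged. -/

namespace List

variable {M : Type*} [AddCommMonoid M] [PartialOrder M] [IsOrderedAddMonoid M]

theorem sum_take_cons_le_sum_take {a : M} {l : List M} (hl : (a :: l).Pairwise (· ≤ ·))
    {n : ℕ} (hn : n ≤ l.length) : ((a :: l).take n).sum ≤ (l.take n).sum := by
  induction l generalizing a n with
  | nil => simp_all
  | cons b l ih =>
    obtain ⟨hab, hbl⟩ := List.pairwise_cons.mp hl
    cases n with
    | zero => simp
    | succ n =>
      simp only [take_succ_cons, sum_cons]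
      exact add_le_add (hab b mem_cons_self)
        (ih hbl (by simpa using hn))

theorem Sublist.sum_take_length_le {t l : List M} (h : t <+ l) (hl : l.Pairwise (· ≤ ·)) :
    (l.take t.length).sum ≤ t.sum := by
  induction h with
  | slnil => simp
  | cons a h ih =>
    exact (sum_take_cons_le_sum_take hl h.length_le).trans (ih hl.of_cons)
  | cons_cons a _ ih =>
    simpa using add_le_add_right (ih hl.of_cons) a

theorem Subperm.sum_take_length_le {t l : List M} (h : t <+~ l) (hl : l.Pairwise (· ≤ ·)) :
    (l.take t.length).sum ≤ t.sum := by
  obtain ⟨t', hperm, hsub⟩ := h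
  rw [← hperm.length_eq, ← hperm.sum_eq]
  exact hsub.sum_take_length_le hl

end List

theorem Finset.card_filter_mem_sym2_mk {V : Type*} [DecidableEq V] {a b : V} (hab : a ≠ b)
    (S : Finset V) :
    #{v ∈ S | v ∈ s(a, b)} = (if a ∈ S then 1 else 0) + (if b ∈ S then 1 else 0) := by
  simp only [Sym2.mem_iff, filter_or, filter_eq']
  rw [card_union_of_disjoint (by split_ifs <;> simp [hab])]
  split_ifs <;> simp

namespace DSI

variable {V : Type*} (G : SimpleGraph V) [DecidableRel G.Adj]

theorem sumSmallest_card_le_sum_degree [Fintype V] (I : Finset V) :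
    sumSmallest G #I ≤ ∑ v ∈ I, G.degree v := by
  have hle : (I.val.map (fun v => G.degree v) : Multiset ℕ) ≤ ↑(dseq G) := by
    rw [dseq, Multiset.sort_eq]
    exact Multiset.map_le_map (val_le_iff.mpr (subset_univ I))
  rw [← Multiset.coe_toList (I.val.map (fun v => G.degree v)), Multiset.coe_le] at hle
  simpa [sumSmallest] using hle.sum_take_length_le (Multiset.pairwise_sort _ _)

theorem mOn_eq_card_filter_edgeFinset [DecidableEq V] [Fintype G.edgeSet] (S : Finset V) :
    mOn G S = #{e ∈ G.edgeFinset | e ∈ S.sym2} := by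
  rw [mOn]
  congr 1
  ext e
  simp [and_comm]

theorem sum_degree_add_mOn_compl [Fintype V] [DecidableEq V] (I : Finset V) :
    ∑ v ∈ I, G.degree v + mOn G Iᶜ = esize G + mOn G I := by
  have hdeg : ∑ v ∈ I, G.degree v = ∑ e ∈ G.edgeFinset, #{v ∈ I | v ∈ e} := by
    simp_rw [← G.card_incidenceFinset_eq_degree, G.incidenceFinset_eq_filter]
    exact sum_card_bipartiteAbove_eq_sum_card_bipartiteBelow (· ∈ ·)
  rw [hdeg, mOn_eq_card_filter_edgeFinset, mOn_eq_card_filter_edgeFinset, esize, card_filter,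
    card_filter, card_eq_sum_ones, ← sum_add_distrib, ← sum_add_distrib]
  -- an edge `e` contributes `#(e ∩ I) = 1 + [e ⊆ I] - [e ⊆ Iᶜ]`
  refine sum_congr rfl fun e he => ?_
  induction e with
  | h a b =>
    have hab : a ≠ b := G.ne_of_adj (by simpa using he)
    rw [card_filter_mem_sym2_mk hab]
    simp only [mk_mem_sym2_iff, mem_compl]
    split_ifs <;> simp_all

theorem two_mul_mOn_eq_sum_card_filter_adj [DecidableEq V] [Fintype G.edgeSet] (S : Finset V) :
    2 * mOn G S = ∑ v ∈ S, #{w ∈ S | G.Adj v w} := by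
  set F := {e ∈ G.edgeFinset | e ∈ S.sym2}
  have hinc : ∀ v ∈ S, {e ∈ F | v ∈ e} = {w ∈ S | G.Adj v w}.image (s(v, ·)) := by
    intro v hv
    ext e
    induction e with
    | h a b =>
      simp only [F, mem_filter, SimpleGraph.mem_edgeFinset, SimpleGraph.mem_edgeSet,
        mk_mem_sym2_iff, mem_image, Sym2.eq_iff, Sym2.mem_iff]
      constructor
      · rintro ⟨⟨hab, ha, hb⟩, rfl | rfl⟩
        · exact ⟨b, ⟨hb, hab⟩, Or.inl ⟨rfl, rfl⟩⟩
        · exact ⟨a, ⟨ha, hab.symm⟩, Or.inr ⟨rfl, rfl⟩⟩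
      · rintro ⟨w, ⟨hw, hvw⟩, ⟨rfl, rfl⟩ | ⟨rfl, rfl⟩⟩
        · exact ⟨⟨hvw, hv, hw⟩, Or.inl rfl⟩
        · exact ⟨⟨hvw.symm, hw, hv⟩, Or.inr rfl⟩
  have hedge : ∀ e ∈ F, #{v ∈ S | v ∈ e} = 2 := by
    intro e he
    induction e with
    | h a b =>
      simp only [F, mem_filter, SimpleGraph.mem_edgeFinset, SimpleGraph.mem_edgeSet,
        mk_mem_sym2_iff] at he
      rw [card_filter_mem_sym2_mk (G.ne_of_adj he.1)]
      simp [he.2.1, he.2.2]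
  calc 2 * mOn G S = ∑ e ∈ F, #{v ∈ S | v ∈ e} := by
        rw [sum_congr rfl hedge, sum_const, smul_eq_mul, mul_comm,
          mOn_eq_card_filter_edgeFinset]
    _ = ∑ v ∈ S, #{e ∈ F | v ∈ e} :=
        (sum_card_bipartiteAbove_eq_sum_card_bipartiteBelow _).symm
    _ = ∑ v ∈ S, #{w ∈ S | G.Adj v w} := sum_congr rfl fun v hv => by
        rw [hinc v hv, card_image_of_injective _ fun _ _ => Sym2.congr_right.mp]

theorem exists_jIndep_card_eq_alphaJ [Fintype V] (j : ℕ) :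
    ∃ I : Finset V, JIndep G j I ∧ #I = alphaJ G j :=
  Nat.sSup_mem (s := {k | ∃ I : Finset V, JIndep G j I ∧ #I = k})
    ⟨0, ∅, fun _ h => absurd h (notMem_empty _), rfl⟩
    ⟨Fintype.card V, by rintro _ ⟨I, -, rfl⟩; exact card_le_univ I⟩

def IsJColoring (j : ℕ) (S : Finset V) {α : Type*} [DecidableEq α] (f : V → α) : Prop :=
  ∀ a, JIndep G j {v ∈ S | f v = a}

noncomputable def chiJOn (j : ℕ) (S : Finset V) : ℕ :=
  sInf {t | ∃ f : V → Fin t, IsJColoring G j S f}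

variable {G} {j : ℕ}

theorem JIndep.mono {A B : Finset V} (hB : JIndep G j B) (hAB : A ⊆ B) : JIndep G j A :=
  fun v hv => (card_le_card (filter_subset_filter _ hAB)).trans_lt (hB v (hAB hv))

theorem JIndep.union [DecidableEq V] {A B : Finset V} (hA : JIndep G j A) (hB : JIndep G j B)
    (hAB : ∀ v ∈ A, ∀ w ∈ B, ¬ G.Adj v w) : JIndep G j (A ∪ B) := by
  intro v hv
  rcases mem_union.mp hv with hvA | hvB
  · refine (card_le_card fun w hw => ?_).trans_lt (hA v hvA)
    obtain ⟨hw, hvw⟩ := mem_filter.mp hw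
    exact mem_filter.mpr ⟨(mem_union.mp hw).resolve_right (hAB v hvA w · hvw), hvw⟩
  · refine (card_le_card fun w hw => ?_).trans_lt (hB v hvB)
    obtain ⟨hw, hvw⟩ := mem_filter.mp hw
    exact mem_filter.mpr ⟨(mem_union.mp hw).resolve_left (hAB w · v hvB hvw.symm), hvw⟩

theorem JIndep.two_mul_mOn_le [Fintype V] [DecidableEq V] {I : Finset V} (hI : JIndep G j I) :
    2 * mOn G I ≤ #I * (j - 1) := by
  rw [two_mul_mOn_eq_sum_card_filter_adj, ← smul_eq_mul, ← sum_const]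
  exact sum_le_sum fun v hv => Nat.le_sub_one_of_lt (hI v hv)

variable (G) in
theorem isJColoring_id [DecidableEq V] (hj : 1 ≤ j) (S : Finset V) : IsJColoring G j S id := by
  intro a v hv
  have hempty : {w ∈ {v ∈ S | id v = a} | G.Adj v w} = ∅ := filter_eq_empty_iff.mpr
    fun w hw hvw => G.ne_of_adj hvw ((mem_filter.mp hv).2.trans (mem_filter.mp hw).2.symm)
  rw [hempty, card_empty]
  exact hj

theorem IsJColoring.comp_equiv {S : Finset V} {α β : Type*} [DecidableEq α] [DecidableEq β]
    {f : V → α} (hf : IsJColoring G j S f) (e : α ≃ β) : IsJColoring G j S (e ∘ f) :=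
  fun b => by simpa only [Function.comp_apply, ← e.eq_symm_apply] using hf (e.symm b)

theorem chiJOn_le_card {S : Finset V} {α : Type*} [Fintype α] [DecidableEq α] {f : V → α}
    (hf : IsJColoring G j S f) : chiJOn G j S ≤ Fintype.card α :=
  Nat.sInf_le ⟨_, hf.comp_equiv (Fintype.equivFin α)⟩

variable (G) in
theorem exists_isJColoring_chiJOn [Fintype V] [DecidableEq V] (hj : 1 ≤ j) (S : Finset V) :
    ∃ f : V → Fin (chiJOn G j S), IsJColoring G j S f :=
  Nat.sInf_mem (s := {t | ∃ f : V → Fin t, IsJColoring G j S f})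
    ⟨_, _, (isJColoring_id G hj S).comp_equiv (Fintype.equivFin V)⟩

theorem IsJColoring.exists_adj [DecidableEq V] {S : Finset V} {f : V → Fin (chiJOn G j S)}
    (hf : IsJColoring G j S f) {c d : Fin (chiJOn G j S)} (hcd : c ≠ d) :
    ∃ v ∈ S, ∃ w ∈ S, f v = c ∧ f w = d ∧ G.Adj v w := by
  by_contra! h
  -- Otherwise recolouring the class of `d` by `c` is a `j`-colouring with one colour fewer.
  let g : V → {x // x ≠ d} := fun v => if hv : f v = d then ⟨c, hcd⟩ else ⟨f v, hv⟩
  have hg : IsJColoring G j S g := by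
    intro x
    by_cases hx : x.1 = c
    · refine ((hf c).union (hf d) ?_).mono fun v hv => ?_
      · simp only [mem_filter]
        exact fun v hv w hw => h v hv.1 w hw.1 hv.2 hw.2
      · simp only [mem_filter, mem_union, g] at hv ⊢
        split_ifs at hv with hvd
        · exact Or.inr ⟨hv.1, hvd⟩
        · exact Or.inl ⟨hv.1, by rw [← hx, ← hv.2]⟩
    · refine (hf x).mono fun v hv => ?_
      simp only [mem_filter, g] at hv ⊢
      split_ifs at hv with hvd
      · exact absurd (congrArg Subtype.val hv.2).symm hx
      · exact ⟨hv.1, by rw [← hv.2]⟩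
  have hcard := chiJOn_le_card hg
  simp only [Fintype.card_subtype_compl, Fintype.card_fin, Fintype.card_unique] at hcard
  have hpos := c.pos
  omega

theorem IsJColoring.choose_two_le_mOn [DecidableEq V] {S : Finset V}
    {f : V → Fin (chiJOn G j S)} (hf : IsJColoring G j S f) :
    (chiJOn G j S).choose 2 ≤ mOn G S := by
  have hsurj : ({z | ¬ z.IsDiag} : Finset (Sym2 (Fin (chiJOn G j S)))) ⊆
      {e ∈ S.sym2 | e ∈ G.edgeSet}.image (Sym2.map f) := by
    intro z hz
    induction z with
    | h c d =>
      obtain ⟨v, hv, w, hw, rfl, rfl, hvw⟩ := hf.exists_adj (by simpa using hz)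
      exact mem_image.mpr ⟨s(v, w), by simp [hv, hw, hvw], rfl⟩
  calc (chiJOn G j S).choose 2
      = #({z | ¬ z.IsDiag} : Finset (Sym2 (Fin (chiJOn G j S)))) := by
        rw [← Fintype.card_subtype, Sym2.card_subtype_not_diag, Fintype.card_fin]
    _ ≤ #({e ∈ S.sym2 | e ∈ G.edgeSet}.image (Sym2.map f)) := card_le_card hsurj
    _ ≤ mOn G S := card_image_le

theorem chiJ_le_chiJOn_compl_add_one [Fintype V] [DecidableEq V] (hj : 1 ≤ j) {I : Finset V}
    (hI : JIndep G j I) : chiJ G j ≤ chiJOn G j Iᶜ + 1 := by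
  obtain ⟨f, hf⟩ := exists_isJColoring_chiJOn G hj Iᶜ
  let g : V → Option (Fin (chiJOn G j Iᶜ)) := fun v => if v ∈ I then none else some (f v)
  have hg : IsJColoring G j univ g := by
    rintro (_ | c)
    · exact hI.mono fun v hv => by simpa [g] using hv
    · exact (hf c).mono fun v hv => by simpa [g] using hv
  -- `chiJ G j` is `chiJOn G j univ` by definition.
  exact (chiJOn_le_card hg).trans_eq (Fintype.card_option.trans (by rw [Fintype.card_fin]))

theorem choose_two_chiJ_sub_one_le_mOn_compl [Fintype V] [DecidableEq V] (hj : 1 ≤ j)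
    {I : Finset V} (hI : JIndep G j I) : (chiJ G j - 1).choose 2 ≤ mOn G Iᶜ := by
  obtain ⟨f, hf⟩ := exists_isJColoring_chiJOn G hj Iᶜ
  have hchi := chiJ_le_chiJOn_compl_add_one hj hI
  exact (Nat.choose_le_choose 2 (by omega)).trans hf.choose_two_le_mOn

end DSI

open DSI in
theorem alphaJ_chromatic_bound {V : Type*} (G : SimpleGraph V) [Fintype V]
    [DecidableEq V] [DecidableRel G.Adj] (j : ℕ) (hj : 1 ≤ j) :
    DSI.alphaJ G j ≤ sSup {k | k ≤ Fintype.card V ∧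
      (DSI.sumSmallest G k : ℚ) + ((DSI.chiJ G j - 1).choose 2 : ℚ)
        - (k : ℚ) * ((j : ℚ) - 1) / 2 ≤ (DSI.esize G : ℚ)} := by
  obtain ⟨I, hI, hIcard⟩ := exists_jIndep_card_eq_alphaJ G j
  refine le_csSup ⟨Fintype.card V, fun k hk => hk.1⟩ ⟨hIcard ▸ card_le_univ I, ?_⟩
  have hsmall : (sumSmallest G #I : ℚ) ≤ ∑ v ∈ I, (G.degree v : ℚ) := by
    exact_mod_cast sumSmallest_card_le_sum_degree G I
  have hsplit : (∑ v ∈ I, G.degree v : ℚ) + mOn G Iᶜ = esize G + mOn G I := by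
    exact_mod_cast sum_degree_add_mOn_compl G I
  have hinside : 2 * (mOn G I : ℚ) ≤ #I * ((j : ℚ) - 1) := by
    have h := hI.two_mul_mOn_le
    qify [hj] at h
    exact h
  have hcompl : ((chiJ G j - 1).choose 2 : ℚ) ≤ mOn G Iᶜ := by
    exact_mod_cast choose_two_chiJ_sub_one_le_mOn_compl hj hI
  rw [← hIcard]
  linarith
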